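/- arXiv:1801.08596 — 2 statements merged into one kernel-verified Lean document; each statement's English description precedes it below -/
import Mathlib

section
/- Let p : ℤ² → ℂ satisfy ∑_{(n,m)∈ℤ²} |p(n,m)|·(1+|αn|+|βm|) < ∞, p ♮ p = p, and p* = p. If any one of the equations (∂₁p + i·∂₂p) ♮ p = 0, p ♮ (∂₁p − i·∂₂p) = 0, (∂₁p − i·∂₂p) ♮ p = 0, or p ♮ (∂₁p + i·∂₂p) = 0 holds, then E(p) = |c₁(p)|, where E(p) = (1/(4π·|αβ|))·[(∂₁p ♮ ∂₁p) + (∂₂p ♮ ∂₂p)](0,0) and c₁(p) = (1/(2πi·|αβ|))·[p ♮ ((∂₁p ♮ ∂₂p) − (∂₂p ♮ ∂₁p))](0,0). -/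
open MeasureTheory Complex Real Filter Finset

noncomputable section

/-- Short-time Fourier transform of `u` with respect to the Gaussian window
`t ↦ exp(-π t²)`, evaluated at time `x` and frequency `ω`. -/
def stft (u : ℝ → ℂ) (x ω : ℝ) : ℂ :=
  ∫ t : ℝ, u t * Complex.exp (-(2 * (Real.pi : ℂ) * Complex.I * (t : ℂ) * (ω : ℂ))) *
    Complex.exp (-((Real.pi : ℂ) * ((t : ℂ) - (x : ℂ)) ^ 2))

/-- Integrand of the `M¹_s(ℝ)` norm. -/
def m1Integrand (s : ℝ) (u : ℝ → ℂ) (p : ℝ × ℝ) : ℝ :=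
  ‖stft u p.1 p.2‖ * (1 + |p.1| + |p.2|) ^ s

/-- Membership in the modulation space `M¹_s(ℝ)`. -/
def MemM1 (s : ℝ) (u : ℝ → ℂ) : Prop :=
  MemLp u 2 volume ∧ Integrable (m1Integrand s u)

/-- The `M¹_s(ℝ)` norm. -/
def m1Norm (s : ℝ) (u : ℝ → ℂ) : ℝ := ∫ p : ℝ × ℝ, m1Integrand s u p

/-- Inner product on `L²(ℝ×ℤ_q)`. -/
def ipq (q : ℕ) [NeZero q] (f g : ℝ × ZMod q → ℂ) : ℂ :=
  ∑ k : ZMod q, ∫ x : ℝ, f (x, k) * (starRingEnd ℂ) (g (x, k))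

/-- Squared norm on `L²(ℝ×ℤ_q)`. -/
def norm2q (q : ℕ) [NeZero q] (f : ℝ × ZMod q → ℂ) : ℝ :=
  ∑ k : ZMod q, ∫ x : ℝ, ‖f (x, k)‖ ^ 2

/-- Membership in `L²(ℝ×ℤ_q)`. -/
def MemL2q (q : ℕ) [NeZero q] (f : ℝ × ZMod q → ℂ) : Prop :=
  ∀ k : ZMod q, MemLp (fun x : ℝ => f (x, k)) 2 volume

/-- Membership in `M¹_s(ℝ×ℤ_q)`: every slice lies in `M¹_s(ℝ)` (and in `L²`). -/
def MemM1q (q : ℕ) [NeZero q] (s : ℝ) (f : ℝ × ZMod q → ℂ) : Prop :=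
  ∀ k : ZMod q, MemM1 s (fun x : ℝ => f (x, k))

/-- The `M¹_s(ℝ×ℤ_q)` norm: sum of slice norms. -/
def m1qNorm (q : ℕ) [NeZero q] (s : ℝ) (f : ℝ × ZMod q → ℂ) : ℝ :=
  ∑ k : ZMod q, m1Norm s (fun x : ℝ => f (x, k))

/-- Translation `T_{λ,l}` on `ℝ×ℤ_q`. -/
def Tsh (q : ℕ) (lam : ℝ) (l : ZMod q) (f : ℝ × ZMod q → ℂ) : ℝ × ZMod q → ℂ :=
  fun p => f (p.1 - lam, p.2 - l)

/-- The character `a ↦ e^{2πi a/q}` of `ℤ_q`. -/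
def zchar (q : ℕ) [NeZero q] (a : ZMod q) : ℂ :=
  Complex.exp (2 * (Real.pi : ℂ) * Complex.I * (a.val : ℂ) / (q : ℂ))

/-- Modulation `E_{γ,c}` on `ℝ×ℤ_q`:  `(E_{γ,c}f)(x,j) = e^{2πi(xγ + jc/q)} f(x,j)`. -/
def Msh (q : ℕ) [NeZero q] (gam : ℝ) (c : ZMod q) (f : ℝ × ZMod q → ℂ) : ℝ × ZMod q → ℂ :=
  fun p => Complex.exp (2 * (Real.pi : ℂ) * Complex.I * (p.1 : ℂ) * (gam : ℂ)) *
    zchar q (p.2 * c) * f p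

/-- The time-frequency shift `π_{n,m} = E_{βm, sm} T_{αn, rn}`. -/
def gpi (q : ℕ) [NeZero q] (α β : ℝ) (r s : ℕ) (nm : ℤ × ℤ) (f : ℝ × ZMod q → ℂ) :
    ℝ × ZMod q → ℂ :=
  Msh q (β * nm.2) ((s : ZMod q) * (nm.2 : ZMod q))
    (Tsh q (α * nm.1) ((r : ZMod q) * (nm.1 : ZMod q)) f)

/-- The adjoint frequency-time shift `π°_{n,m} = T_{n/(βq), -s°n} E_{m/(αq), -r°m}`. -/
def gpio (q : ℕ) [NeZero q] (α β : ℝ) (rc sc : ℕ) (nm : ℤ × ℤ) (f : ℝ × ZMod q → ℂ) :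
    ℝ × ZMod q → ℂ :=
  Tsh q ((nm.1 : ℝ) / (β * q)) (-((sc : ZMod q) * (nm.1 : ZMod q)))
    (Msh q ((nm.2 : ℝ) / (α * q)) (-((rc : ZMod q) * (nm.2 : ZMod q))) f)

/-- `g` generates a Gabor frame for `L²(ℝ×ℤ_q)` w.r.t. the shifts `π_{n,m}`. -/
def IsGaborFrame (q : ℕ) [NeZero q] (α β : ℝ) (r s : ℕ) (g : ℝ × ZMod q → ℂ) : Prop :=
  ∃ A B : ℝ, 0 < A ∧ 0 < B ∧ ∀ f : ℝ × ZMod q → ℂ, MemL2q q f →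
    Summable (fun nm : ℤ × ℤ => ‖ipq q f (gpi q α β r s nm g)‖ ^ 2) ∧
    A * norm2q q f ≤ ∑' nm : ℤ × ℤ, ‖ipq q f (gpi q α β r s nm g)‖ ^ 2 ∧
    ∑' nm : ℤ × ℤ, ‖ipq q f (gpi q α β r s nm g)‖ ^ 2 ≤ B * norm2q q f

/-- Weak characterization of `S_g h = f`, where `S_g` is the Gabor frame operator of `g`:
for every `u ∈ L²`, `∑_{n,m} ⟨h, π_{n,m}g⟩⟨π_{n,m}g, u⟩ = ⟨f, u⟩`.  In particular, for a
Gabor frame generator `g`, `SgApplyEq g h f` holds iff `h = S_g⁻¹ f`. -/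
def SgApplyEq (q : ℕ) [NeZero q] (α β : ℝ) (r s : ℕ) (g h f : ℝ × ZMod q → ℂ) : Prop :=
  ∀ u : ℝ × ZMod q → ℂ, MemL2q q u →
    Summable (fun nm : ℤ × ℤ => ipq q h (gpi q α β r s nm g) * ipq q (gpi q α β r s nm g) u) ∧
    ∑' nm : ℤ × ℤ, ipq q h (gpi q α β r s nm g) * ipq q (gpi q α β r s nm g) u = ipq q f u

/-- `g` and `h` are a dual pair of Gabor frame generators:
`f = ∑_{n,m} ⟨f, π_{n,m}g⟩ π_{n,m}h` for all `f ∈ L²`, with unconditional `L²` convergence. -/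
def IsDualPair (q : ℕ) [NeZero q] (α β : ℝ) (r s : ℕ) (g h : ℝ × ZMod q → ℂ) : Prop :=
  ∀ f : ℝ × ZMod q → ℂ, MemL2q q f →
    Filter.Tendsto (fun F : Finset (ℤ × ℤ) =>
      norm2q q (fun p => f p - ∑ nm ∈ F, ipq q f (gpi q α β r s nm g) * gpi q α β r s nm h p))
      Filter.atTop (nhds 0)

/-- Slice-wise a.e. equality (equality in `L²(ℝ×ℤ_q)`). -/
def AeEqq (q : ℕ) [NeZero q] (f g : ℝ × ZMod q → ℂ) : Prop :=
  ∀ k : ZMod q, (fun x : ℝ => f (x, k)) =ᵐ[volume] (fun x : ℝ => g (x, k))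

/-- The 2-cocycle factor `e^{-2πi(α x₁ · β y₂ + r x₁ · s y₂ / q)}`. -/
def twFac (q : ℕ) (α β : ℝ) (r s : ℕ) (x y : ℤ × ℤ) : ℂ :=
  Complex.exp (-(2 * (Real.pi : ℂ) * Complex.I) *
    ((α * x.1 * (β * y.2) + (r * x.1) * (s * y.2) / q : ℝ) : ℂ))

/-- Twisted convolution of sequences on `ℤ²` (indexing the lattice `Λ×Γ`). -/
def twConv (q : ℕ) (α β : ℝ) (r s : ℕ) (a b : ℤ × ℤ → ℂ) (nm : ℤ × ℤ) : ℂ :=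
  ∑' x : ℤ × ℤ, a x * b (nm - x) * twFac q α β r s x (nm - x)

/-- The derivation `∂₁`. -/
def td1 (α : ℝ) (a : ℤ × ℤ → ℂ) : ℤ × ℤ → ℂ :=
  fun nm => 2 * (Real.pi : ℂ) * Complex.I * ((α * nm.1 : ℝ) : ℂ) * a nm

/-- The derivation `∂₂`. -/
def td2 (β : ℝ) (a : ℤ × ℤ → ℂ) : ℤ × ℤ → ℂ :=
  fun nm => 2 * (Real.pi : ℂ) * Complex.I * ((β * nm.2 : ℝ) : ℂ) * a nm

/-- The covariant derivative `∇₁ f (x,k) = 2πi x f(x,k)`. -/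
def covd1 (q : ℕ) (f : ℝ × ZMod q → ℂ) : ℝ × ZMod q → ℂ :=
  fun p => 2 * (Real.pi : ℂ) * Complex.I * (p.1 : ℂ) * f p

/-- 1D Gabor atom `E_b T_a g`. -/
def gabor1 (a b : ℝ) (g : ℝ → ℂ) : ℝ → ℂ :=
  fun t => Complex.exp (2 * (Real.pi : ℂ) * Complex.I * (b : ℂ) * (t : ℂ)) * g (t - a)

/-- Inner product on `L²(ℝ)`. -/
def ip1 (f g : ℝ → ℂ) : ℂ := ∫ t : ℝ, f t * (starRingEnd ℂ) (g t)

/-- Squared norm on `L²(ℝ)`. -/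
def norm2R (f : ℝ → ℂ) : ℝ := ∫ t : ℝ, ‖f t‖ ^ 2

/-- Integrand of the continuous twisted convolution. -/
def ctwInt (q : ℕ) [NeZero q] (K₁ K₂ : ℝ × ZMod q × ℝ × ZMod q → ℂ)
    (v : ℝ × ZMod q × ℝ × ZMod q) (l' c' : ZMod q) (w : ℝ × ℝ) : ℂ :=
  K₁ (w.1, l', w.2, c') * K₂ (v.1 - w.1, v.2.1 - l', v.2.2.1 - w.2, v.2.2.2 - c') *
    Complex.exp (-(2 * (Real.pi : ℂ) * Complex.I) * ((w.1 * (v.2.2.1 - w.2) : ℝ) : ℂ)) *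
    (starRingEnd ℂ) (zchar q (l' * (v.2.2.2 - c')))

/-- Continuous twisted convolution on `ℝ×ℤ_q×ℝ̂×ℤ̂_q`. -/
def ctwC (q : ℕ) [NeZero q] (K₁ K₂ : ℝ × ZMod q × ℝ × ZMod q → ℂ)
    (v : ℝ × ZMod q × ℝ × ZMod q) : ℂ :=
  ∑ l' : ZMod q, ∑ c' : ZMod q, ∫ w : ℝ × ℝ, ctwInt q K₁ K₂ v l' c' w

/-- The derivation `∂₁` of the Moyal plane algebra. -/
def cd1 (q : ℕ) (K : ℝ × ZMod q × ℝ × ZMod q → ℂ) : ℝ × ZMod q × ℝ × ZMod q → ℂ :=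
  fun v => 2 * (Real.pi : ℂ) * Complex.I * (v.1 : ℂ) * K v

/-- The derivation `∂₂` of the Moyal plane algebra. -/
def cd2 (q : ℕ) (K : ℝ × ZMod q × ℝ × ZMod q → ℂ) : ℝ × ZMod q × ℝ × ZMod q → ℂ :=
  fun v => 2 * (Real.pi : ℂ) * Complex.I * (v.2.2.1 : ℂ) * K v

namespace St11

variable (q : ℕ) (α β : ℝ) (r s : ℕ)

lemma fac_eq' (x y : ℤ × ℤ) : twFac q α β r s x y =
    Complex.exp ((-(2 * (Real.pi : ℂ) * Complex.I) * ((α * β + (r : ℝ) * s / q : ℝ) : ℂ)) *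
      ((x.1 * y.2 : ℤ) : ℂ)) := by
  rw [twFac]
  congr 1
  push_cast
  ring

lemma fac_norm (x y : ℤ × ℤ) : ‖twFac q α β r s x y‖ = 1 := by
  rw [twFac, Complex.norm_exp]
  norm_num [Complex.mul_re, Complex.mul_I_re]

lemma fac_cocycle (u v : ℤ × ℤ) :
    twFac q α β r s v (-u - v) * twFac q α β r s u (-u) =
      twFac q α β r s (-u - v) u * twFac q α β r s v (-v) := by
  rw [fac_eq', fac_eq', fac_eq', fac_eq', ← Complex.exp_add, ← Complex.exp_add,
    ← mul_add, ← mul_add]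
  congr 2
  push_cast [Prod.fst_sub, Prod.snd_sub, Prod.fst_neg, Prod.snd_neg]
  ring

lemma fac_self_mul (u : ℤ × ℤ) : twFac q α β r s u u * twFac q α β r s u (-u) = 1 := by
  rw [fac_eq', fac_eq', ← Complex.exp_add, ← mul_add, ← Complex.exp_zero]
  have h : ((u.1 * u.2 : ℤ) : ℂ) + ((u.1 * (-u).2 : ℤ) : ℂ) = 0 := by
    push_cast [Prod.snd_neg]; ring
  rw [h, mul_zero]

/-- `Φ(u,v) = twFac v (-u-v) * twFac u (-u)`. -/
def Phi (w : (ℤ × ℤ) × (ℤ × ℤ)) : ℂ :=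
  twFac q α β r s w.2 (-w.1 - w.2) * twFac q α β r s w.1 (-w.1)

lemma Phi_norm (w : (ℤ × ℤ) × (ℤ × ℤ)) : ‖Phi q α β r s w‖ = 1 := by
  rw [Phi, norm_mul, fac_norm, fac_norm, mul_one]

/-- The triple-trace. -/
def tau3 (x y z : ℤ × ℤ → ℂ) : ℂ :=
  ∑' w : (ℤ × ℤ) × (ℤ × ℤ), x w.1 * y w.2 * z (-w.1 - w.2) * Phi q α β r s w

variable {q α β r s}

lemma bdd_of_l1 {z : ℤ × ℤ → ℂ} (hz : Summable fun u => ‖z u‖) (v : ℤ × ℤ) :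
    ‖z v‖ ≤ ∑' u, ‖z u‖ :=
  Summable.le_tsum hz v fun _ _ => norm_nonneg _

lemma summable_conv_norm {x z : ℤ × ℤ → ℂ} (hx : Summable fun u => ‖x u‖) {C : ℝ}
    (hz : ∀ v, ‖z v‖ ≤ C) (nm : ℤ × ℤ) :
    Summable fun u => ‖x u * z (nm - u) * twFac q α β r s u (nm - u)‖ := by
  apply Summable.of_nonneg_of_le (fun u => norm_nonneg _) _ (hx.mul_right C)
  intro u
  rw [norm_mul, norm_mul, fac_norm, mul_one]
  exact mul_le_mul_of_nonneg_left (hz _) (norm_nonneg _)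

lemma summable_conv_term {x z : ℤ × ℤ → ℂ} (hx : Summable fun u => ‖x u‖) {C : ℝ}
    (hz : ∀ v, ‖z v‖ ≤ C) (nm : ℤ × ℤ) :
    Summable fun u => x u * z (nm - u) * twFac q α β r s u (nm - u) :=
  (summable_conv_norm hx hz nm).of_norm

lemma conv_bound {y z : ℤ × ℤ → ℂ} (hy : Summable fun u => ‖y u‖)
    (hz : Summable fun u => ‖z u‖) (v : ℤ × ℤ) :
    ‖twConv q α β r s y z v‖ ≤ (∑' u, ‖y u‖) * (∑' u, ‖z u‖) := by
  rw [twConv]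
  refine le_trans (norm_tsum_le_tsum_norm (summable_conv_norm hy (bdd_of_l1 hz) v)) ?_
  rw [← tsum_mul_right]
  refine Summable.tsum_le_tsum (fun u => ?_) (summable_conv_norm hy (bdd_of_l1 hz) v)
    (hy.mul_right _)
  rw [norm_mul, norm_mul, fac_norm, mul_one]
  exact mul_le_mul_of_nonneg_left (bdd_of_l1 hz _) (norm_nonneg _)

lemma summable_tau3 {x y z : ℤ × ℤ → ℂ} (hx : Summable fun u => ‖x u‖)
    (hy : Summable fun u => ‖y u‖) {C : ℝ} (hz : ∀ v, ‖z v‖ ≤ C) :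
    Summable fun w : (ℤ × ℤ) × (ℤ × ℤ) =>
      x w.1 * y w.2 * z (-w.1 - w.2) * Phi q α β r s w := by
  apply Summable.of_norm
  apply Summable.of_nonneg_of_le (fun u => norm_nonneg _) _
    ((hx.mul_of_nonneg hy (fun _ => norm_nonneg _) (fun _ => norm_nonneg _)).mul_right C)
  intro w
  rw [norm_mul, Phi_norm, mul_one, norm_mul, norm_mul]
  calc ‖x w.1‖ * ‖y w.2‖ * ‖z (-w.1 - w.2)‖ ≤ ‖x w.1‖ * ‖y w.2‖ * C :=
        mul_le_mul_of_nonneg_left (hz _) (by positivity)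
    _ = ‖x w.1‖ * ‖y w.2‖ * C := rfl

lemma conv_conv_eq_tau3 {x y z : ℤ × ℤ → ℂ} (hx : Summable fun u => ‖x u‖)
    (hy : Summable fun u => ‖y u‖) (hz : Summable fun u => ‖z u‖) :
    twConv q α β r s x (fun w => twConv q α β r s y z w) ((0 : ℤ), (0 : ℤ)) =
      tau3 q α β r s x y z := by
  rw [twConv, tau3, Summable.tsum_prod (summable_tau3 hx hy (bdd_of_l1 hz))]
  apply tsum_congr
  intro u
  have h0 : ((0 : ℤ), (0 : ℤ)) - u = -u := by rw [Prod.mk_zero_zero, zero_sub]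
  rw [h0, twConv, mul_assoc, ← tsum_mul_right, ← tsum_mul_left]
  apply tsum_congr
  intro v
  rw [Phi]
  ring

lemma tau3_cyclic (x y z : ℤ × ℤ → ℂ) :
    tau3 q α β r s x y z = tau3 q α β r s y z x := by
  rw [tau3, tau3]
  rw [← Equiv.tsum_eq
    (⟨fun w => (w.2, -w.1 - w.2), fun w => (-w.1 - w.2, w.1),
      fun w => by simp only; rw [Prod.mk.injEq]; constructor <;> ring,
      fun w => by simp only; rw [Prod.mk.injEq]; constructor <;> ring⟩ :
        (ℤ × ℤ) × (ℤ × ℤ) ≃ (ℤ × ℤ) × (ℤ × ℤ))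
    (fun w => y w.1 * z w.2 * x (-w.1 - w.2) * Phi q α β r s w)]
  apply tsum_congr
  intro w
  simp only [Equiv.coe_fn_mk]
  have h1 : -w.2 - (-w.1 - w.2) = w.1 := by ring
  rw [h1, Phi, Phi]
  show _ = y w.2 * z (-w.1 - w.2) * x w.1 *
    (twFac q α β r s (-w.1 - w.2) (-w.2 - (-w.1 - w.2)) * twFac q α β r s w.2 (-w.2))
  rw [h1, ← fac_cocycle]
  ring

lemma tsum_conv_eq_tau3 {x y z : ℤ × ℤ → ℂ} (hx : Summable fun u => ‖x u‖)
    (hy : Summable fun u => ‖y u‖) (hz : Summable fun u => ‖z u‖) :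
    (∑' u : ℤ × ℤ, x u * twConv q α β r s y z (((0 : ℤ), (0 : ℤ)) - u) *
      twFac q α β r s u (((0 : ℤ), (0 : ℤ)) - u)) = tau3 q α β r s x y z := by
  rw [← conv_conv_eq_tau3 hx hy hz, twConv]

lemma tau3_zero {x y z : ℤ × ℤ → ℂ} (hx : Summable fun u => ‖x u‖)
    (hy : Summable fun u => ‖y u‖) (hz : Summable fun u => ‖z u‖)
    (h : ∀ nm, twConv q α β r s y z nm = 0) : tau3 q α β r s x y z = 0 := by
  rw [← tsum_conv_eq_tau3 hx hy hz]
  have : ∀ u : ℤ × ℤ, x u * twConv q α β r s y z (((0 : ℤ), (0 : ℤ)) - u) *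
      twFac q α β r s u (((0 : ℤ), (0 : ℤ)) - u) = 0 := by
    intro u; rw [h]; ring
  rw [tsum_congr this, tsum_zero]

lemma leib1 {p : ℤ × ℤ → ℂ} (hp : Summable fun u => ‖p u‖)
    (hd : Summable fun u => ‖td1 α p u‖)
    (hidem : ∀ nm, twConv q α β r s p p nm = p nm) (nm : ℤ × ℤ) :
    td1 α p nm = twConv q α β r s (td1 α p) p nm + twConv q α β r s p (td1 α p) nm := by
  have hS1 := summable_conv_term (q := q) (α := α) (β := β) (r := r) (s := s) hd
    (bdd_of_l1 hp) nm
  have hS2 := summable_conv_term (q := q) (α := α) (β := β) (r := r) (s := s) hp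
    (bdd_of_l1 hd) nm
  conv_lhs => rw [show td1 α p nm =
    2 * (Real.pi : ℂ) * Complex.I * ((α * nm.1 : ℝ) : ℂ) * p nm from rfl,
    ← hidem nm, twConv, ← tsum_mul_left]
  rw [twConv, twConv, ← Summable.tsum_add hS1 hS2]
  apply tsum_congr
  intro u
  simp only [td1]
  have hsplit : ((α * nm.1 : ℝ) : ℂ) = ((α * u.1 : ℝ) : ℂ) + ((α * (nm - u).1 : ℝ) : ℂ) := by
    push_cast [Prod.fst_sub]; ring
  rw [hsplit]; ring

lemma leib2 {p : ℤ × ℤ → ℂ} (hp : Summable fun u => ‖p u‖)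
    (hd : Summable fun u => ‖td2 β p u‖)
    (hidem : ∀ nm, twConv q α β r s p p nm = p nm) (nm : ℤ × ℤ) :
    td2 β p nm = twConv q α β r s (td2 β p) p nm + twConv q α β r s p (td2 β p) nm := by
  have hS1 := summable_conv_term (q := q) (α := α) (β := β) (r := r) (s := s) hd
    (bdd_of_l1 hp) nm
  have hS2 := summable_conv_term (q := q) (α := α) (β := β) (r := r) (s := s) hp
    (bdd_of_l1 hd) nm
  conv_lhs => rw [show td2 β p nm =
    2 * (Real.pi : ℂ) * Complex.I * ((β * nm.2 : ℝ) : ℂ) * p nm from rfl,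
    ← hidem nm, twConv, ← tsum_mul_left]
  rw [twConv, twConv, ← Summable.tsum_add hS1 hS2]
  apply tsum_congr
  intro u
  simp only [td2]
  have hsplit : ((β * nm.2 : ℝ) : ℂ) = ((β * u.2 : ℝ) : ℂ) + ((β * (nm - u).2 : ℝ) : ℂ) := by
    push_cast [Prod.snd_sub]; ring
  rw [hsplit]; ring

lemma conv_self_eq_two_tau3 {p d : ℤ × ℤ → ℂ} (hp : Summable fun u => ‖p u‖)
    (hd : Summable fun u => ‖d u‖)
    (hleib : ∀ nm, d nm = twConv q α β r s d p nm + twConv q α β r s p d nm) :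
    twConv q α β r s d d ((0 : ℤ), (0 : ℤ)) = 2 * tau3 q α β r s p d d := by
  have hdp := conv_bound (q := q) (α := α) (β := β) (r := r) (s := s) hd hp
  have hpd := conv_bound (q := q) (α := α) (β := β) (r := r) (s := s) hp hd
  have S1 := summable_conv_term (q := q) (α := α) (β := β) (r := r) (s := s) hd hdp
    ((0 : ℤ), (0 : ℤ))
  have S2 := summable_conv_term (q := q) (α := α) (β := β) (r := r) (s := s) hd hpd
    ((0 : ℤ), (0 : ℤ))
  have key : twConv q α β r s d d ((0 : ℤ), (0 : ℤ)) =
      ∑' u : ℤ × ℤ,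
        (d u * twConv q α β r s d p (((0 : ℤ), (0 : ℤ)) - u) *
            twFac q α β r s u (((0 : ℤ), (0 : ℤ)) - u) +
          d u * twConv q α β r s p d (((0 : ℤ), (0 : ℤ)) - u) *
            twFac q α β r s u (((0 : ℤ), (0 : ℤ)) - u)) := by
    rw [twConv]
    apply tsum_congr
    intro u
    rw [hleib (((0 : ℤ), (0 : ℤ)) - u)]
    ring
  rw [key, Summable.tsum_add S1 S2, tsum_conv_eq_tau3 hd hd hp, tsum_conv_eq_tau3 hd hp hd]
  have c1 : tau3 q α β r s d d p = tau3 q α β r s p d d := by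
    rw [tau3_cyclic d d p, tau3_cyclic d p d]
  have c2 : tau3 q α β r s d p d = tau3 q α β r s p d d := tau3_cyclic d p d
  rw [c1, c2]; ring

lemma conv_self_nonneg {d : ℤ × ℤ → ℂ} (hd : Summable fun u => ‖d u‖)
    (hsad : ∀ u : ℤ × ℤ, d u = twFac q α β r s u u * (starRingEnd ℂ) (d (-u))) :
    ∃ t : ℝ, 0 ≤ t ∧ twConv q α β r s d d ((0 : ℤ), (0 : ℤ)) = (t : ℂ) := by
  refine ⟨∑' u : ℤ × ℤ, ‖d (-u)‖ ^ 2, tsum_nonneg fun u => sq_nonneg _, ?_⟩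
  rw [twConv, Complex.ofReal_tsum]
  apply tsum_congr
  intro u
  have h0 : ((0 : ℤ), (0 : ℤ)) - u = -u := by rw [Prod.mk_zero_zero, zero_sub]
  rw [h0]
  conv_lhs => rw [hsad u]
  have hz : (starRingEnd ℂ) (d (-u)) * d (-u) = ((‖d (-u)‖ ^ 2 : ℝ) : ℂ) := by
    rw [mul_comm, Complex.mul_conj, Complex.normSq_eq_norm_sq]
  calc twFac q α β r s u u * (starRingEnd ℂ) (d (-u)) * d (-u) * twFac q α β r s u (-u)
      = (starRingEnd ℂ) (d (-u)) * d (-u) *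
        (twFac q α β r s u u * twFac q α β r s u (-u)) := by ring
    _ = ((‖d (-u)‖ ^ 2 : ℝ) : ℂ) := by rw [hz, fac_self_mul, mul_one]

lemma tau3_expand {p d1 d2 : ℤ × ℤ → ℂ} (hp : Summable fun u => ‖p u‖)
    (h1 : Summable fun u => ‖d1 u‖) (h2 : Summable fun u => ‖d2 u‖) (c c' : ℂ) :
    tau3 q α β r s p (fun u => d1 u + c * d2 u) (fun u => d1 u + c' * d2 u) =
      tau3 q α β r s p d1 d1 + c' * tau3 q α β r s p d1 d2 +
        c * tau3 q α β r s p d2 d1 + c * c' * tau3 q α β r s p d2 d2 := by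
  have b1 := bdd_of_l1 h1
  have b2 := bdd_of_l1 h2
  have S11 := summable_tau3 (q := q) (α := α) (β := β) (r := r) (s := s) hp h1 b1
  have S12 := summable_tau3 (q := q) (α := α) (β := β) (r := r) (s := s) hp h1 b2
  have S21 := summable_tau3 (q := q) (α := α) (β := β) (r := r) (s := s) hp h2 b1
  have S22 := summable_tau3 (q := q) (α := α) (β := β) (r := r) (s := s) hp h2 b2
  simp only [tau3]
  have key : (fun w : (ℤ × ℤ) × (ℤ × ℤ) =>
      p w.1 * (d1 w.2 + c * d2 w.2) * (d1 (-w.1 - w.2) + c' * d2 (-w.1 - w.2)) *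
        Phi q α β r s w) =
    fun w => (p w.1 * d1 w.2 * d1 (-w.1 - w.2) * Phi q α β r s w +
        c' * (p w.1 * d1 w.2 * d2 (-w.1 - w.2) * Phi q α β r s w)) +
      (c * (p w.1 * d2 w.2 * d1 (-w.1 - w.2) * Phi q α β r s w) +
        c * c' * (p w.1 * d2 w.2 * d2 (-w.1 - w.2) * Phi q α β r s w)) := by
    funext w; ring
  rw [key, Summable.tsum_add (S11.add (S12.mul_left c')) ((S21.mul_left c).add (S22.mul_left (c * c'))),
    Summable.tsum_add S11 (S12.mul_left c'), Summable.tsum_add (S21.mul_left c) (S22.mul_left (c * c')),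
    tsum_mul_left, tsum_mul_left, tsum_mul_left]
  ring

lemma sa_td1 {p : ℤ × ℤ → ℂ}
    (hsa : ∀ nm : ℤ × ℤ, twFac q α β r s nm nm * (starRingEnd ℂ) (p (-nm)) = p nm)
    (u : ℤ × ℤ) :
    td1 α p u = twFac q α β r s u u * (starRingEnd ℂ) (td1 α p (-u)) := by
  have hc : (starRingEnd ℂ) (td1 α p (-u)) =
      2 * (Real.pi : ℂ) * Complex.I * ((α * u.1 : ℝ) : ℂ) * (starRingEnd ℂ) (p (-u)) := by
    simp only [td1, map_mul, Complex.conj_I, Complex.conj_ofReal, map_ofNat]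
    push_cast [Prod.fst_neg]
    ring
  rw [hc]
  simp only [td1]
  rw [← hsa u]
  ring

lemma sa_td2 {p : ℤ × ℤ → ℂ}
    (hsa : ∀ nm : ℤ × ℤ, twFac q α β r s nm nm * (starRingEnd ℂ) (p (-nm)) = p nm)
    (u : ℤ × ℤ) :
    td2 β p u = twFac q α β r s u u * (starRingEnd ℂ) (td2 β p (-u)) := by
  have hc : (starRingEnd ℂ) (td2 β p (-u)) =
      2 * (Real.pi : ℂ) * Complex.I * ((β * u.2 : ℝ) : ℂ) * (starRingEnd ℂ) (p (-u)) := by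
    simp only [td2, map_mul, Complex.conj_I, Complex.conj_ofReal, map_ofNat]
    push_cast [Prod.snd_neg]
    ring
  rw [hc]
  simp only [td2]
  rw [← hsa u]
  ring

end St11

/-- if a projection `p` in `ℓ¹₁(Λ×Γ)` satisfies one of the (anti-)self
duality equations, then the energy `E(p)` equals `|c₁(p)|`. -/
theorem statement11 (q : ℕ) [NeZero q] (α β : ℝ) (hα : α ≠ 0) (hβ : β ≠ 0)
    (r s : ℕ) (hr : r < q) (hs : s < q) (hrq : Nat.Coprime r q) (hsq : Nat.Coprime s q)
    (p : ℤ × ℤ → ℂ)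
    (hp1 : Summable (fun nm : ℤ × ℤ =>
      ‖p nm‖ * (1 + |α * nm.1| + |β * nm.2|)))
    (hidem : ∀ nm : ℤ × ℤ, twConv q α β r s p p nm = p nm)
    (hsa : ∀ nm : ℤ × ℤ, twFac q α β r s nm nm * (starRingEnd ℂ) (p (-nm)) = p nm)
    (hsoliton :
      (∀ nm : ℤ × ℤ,
        twConv q α β r s (fun y => td1 α p y + Complex.I * td2 β p y) p nm = 0) ∨
      (∀ nm : ℤ × ℤ,
        twConv q α β r s p (fun y => td1 α p y - Complex.I * td2 β p y) nm = 0) ∨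
      (∀ nm : ℤ × ℤ,
        twConv q α β r s (fun y => td1 α p y - Complex.I * td2 β p y) p nm = 0) ∨
      (∀ nm : ℤ × ℤ,
        twConv q α β r s p (fun y => td1 α p y + Complex.I * td2 β p y) nm = 0))
    (Ep c1p : ℂ)
    (hEp : Ep = (4 * (Real.pi : ℂ) * ((|α * β| : ℝ) : ℂ))⁻¹ *
      (twConv q α β r s (td1 α p) (td1 α p) (0, 0) +
        twConv q α β r s (td2 β p) (td2 β p) (0, 0)))
    (hc1p : c1p = (2 * (Real.pi : ℂ) * Complex.I * ((|α * β| : ℝ) : ℂ))⁻¹ *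
      twConv q α β r s p
        (fun y => twConv q α β r s (td1 α p) (td2 β p) y -
          twConv q α β r s (td2 β p) (td1 α p) y) (0, 0)) :
    Ep = ((‖c1p‖ : ℝ) : ℂ) := by
  have hπ : (Real.pi : ℂ) ≠ 0 := Complex.ofReal_ne_zero.mpr Real.pi_ne_zero
  have hk0 : (0 : ℝ) < |α * β| := abs_pos.mpr (mul_ne_zero hα hβ)
  have hkC : ((|α * β| : ℝ) : ℂ) ≠ 0 := Complex.ofReal_ne_zero.mpr (ne_of_gt hk0)
  -- summability facts
  have hpw : Summable (fun nm : ℤ × ℤ => ‖p nm‖ * (1 + |α * nm.1| + |β * nm.2|)) := by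
    exact hp1
  have hpL : Summable fun u : ℤ × ℤ => ‖p u‖ := by
    apply Summable.of_nonneg_of_le (fun u => norm_nonneg _) _ hpw
    intro u
    refine le_mul_of_one_le_right (norm_nonneg _) ?_
    have h1 := abs_nonneg (α * (u.1 : ℝ))
    have h2 := abs_nonneg (β * (u.2 : ℝ))
    linarith
  have hn1 : ∀ u : ℤ × ℤ, ‖td1 α p u‖ = 2 * Real.pi * (|α * u.1| * ‖p u‖) := by
    intro u
    simp only [td1, norm_mul, Complex.norm_I, Complex.norm_real, Complex.norm_ofNat,
      Real.norm_eq_abs, mul_one]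
    rw [_root_.abs_of_nonneg Real.pi_pos.le, abs_mul]
    ring
  have hn2 : ∀ u : ℤ × ℤ, ‖td2 β p u‖ = 2 * Real.pi * (|β * u.2| * ‖p u‖) := by
    intro u
    simp only [td2, norm_mul, Complex.norm_I, Complex.norm_real, Complex.norm_ofNat,
      Real.norm_eq_abs, mul_one]
    rw [_root_.abs_of_nonneg Real.pi_pos.le, abs_mul]
    ring
  have hd1L : Summable fun u : ℤ × ℤ => ‖td1 α p u‖ := by
    apply Summable.of_nonneg_of_le (fun u => norm_nonneg _) _ (hpw.mul_left (2 * Real.pi))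
    intro u
    rw [hn1 u]
    apply mul_le_mul_of_nonneg_left _ (by positivity : (0:ℝ) ≤ 2 * Real.pi)
    nlinarith [norm_nonneg (p u), mul_nonneg (norm_nonneg (p u)) (abs_nonneg (β * (u.2 : ℝ)))]
  have hd2L : Summable fun u : ℤ × ℤ => ‖td2 β p u‖ := by
    apply Summable.of_nonneg_of_le (fun u => norm_nonneg _) _ (hpw.mul_left (2 * Real.pi))
    intro u
    rw [hn2 u]
    apply mul_le_mul_of_nonneg_left _ (by positivity : (0:ℝ) ≤ 2 * Real.pi)
    nlinarith [norm_nonneg (p u), mul_nonneg (norm_nonneg (p u)) (abs_nonneg (α * (u.1 : ℝ)))]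
  have haL : Summable fun u : ℤ × ℤ => ‖td1 α p u + Complex.I * td2 β p u‖ := by
    apply Summable.of_nonneg_of_le (fun u => norm_nonneg _) _ (hd1L.add hd2L)
    intro u
    calc ‖td1 α p u + Complex.I * td2 β p u‖
        ≤ ‖td1 α p u‖ + ‖Complex.I * td2 β p u‖ := norm_add_le _ _
      _ = ‖td1 α p u‖ + ‖td2 β p u‖ := by rw [norm_mul, Complex.norm_I, one_mul]
  have hbL : Summable fun u : ℤ × ℤ => ‖td1 α p u - Complex.I * td2 β p u‖ := by
    apply Summable.of_nonneg_of_le (fun u => norm_nonneg _) _ (hd1L.add hd2L)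
    intro u
    calc ‖td1 α p u - Complex.I * td2 β p u‖
        ≤ ‖td1 α p u‖ + ‖Complex.I * td2 β p u‖ := norm_sub_le _ _
      _ = ‖td1 α p u‖ + ‖td2 β p u‖ := by rw [norm_mul, Complex.norm_I, one_mul]
  -- Leibniz and positivity
  have hl1 := St11.leib1 (q := q) (r := r) (s := s) (β := β) hpL hd1L hidem
  have hl2 := St11.leib2 (q := q) (r := r) (s := s) (α := α) hpL hd2L hidem
  have htwo1 := St11.conv_self_eq_two_tau3 hpL hd1L hl1
  have htwo2 := St11.conv_self_eq_two_tau3 hpL hd2L hl2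
  obtain ⟨t1, ht1, hT1⟩ := St11.conv_self_nonneg hd1L (St11.sa_td1 hsa)
  obtain ⟨t2, ht2, hT2⟩ := St11.conv_self_nonneg hd2L (St11.sa_td2 hsa)
  have h1 : 2 * St11.tau3 q α β r s p (td1 α p) (td1 α p) = (t1 : ℂ) :=
    htwo1.symm.trans hT1
  have h2 : 2 * St11.tau3 q α β r s p (td2 β p) (td2 β p) = (t2 : ℂ) :=
    htwo2.symm.trans hT2
  -- c1p split
  have hcsplit : twConv q α β r s p
      (fun y => twConv q α β r s (td1 α p) (td2 β p) y -
        twConv q α β r s (td2 β p) (td1 α p) y) ((0 : ℤ), (0 : ℤ)) =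
      St11.tau3 q α β r s p (td1 α p) (td2 β p) -
        St11.tau3 q α β r s p (td2 β p) (td1 α p) := by
    have S1 := St11.summable_conv_term (q := q) (α := α) (β := β) (r := r) (s := s) hpL
      (St11.conv_bound (q := q) (α := α) (β := β) (r := r) (s := s) hd1L hd2L)
      ((0 : ℤ), (0 : ℤ))
    have S2 := St11.summable_conv_term (q := q) (α := α) (β := β) (r := r) (s := s) hpL
      (St11.conv_bound (q := q) (α := α) (β := β) (r := r) (s := s) hd2L hd1L)
      ((0 : ℤ), (0 : ℤ))
    rw [twConv]
    have key : ∀ u : ℤ × ℤ,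
        p u * ((fun y => twConv q α β r s (td1 α p) (td2 β p) y -
          twConv q α β r s (td2 β p) (td1 α p) y) (((0 : ℤ), (0 : ℤ)) - u)) *
            twFac q α β r s u (((0 : ℤ), (0 : ℤ)) - u) =
        p u * twConv q α β r s (td1 α p) (td2 β p) (((0 : ℤ), (0 : ℤ)) - u) *
            twFac q α β r s u (((0 : ℤ), (0 : ℤ)) - u) -
          p u * twConv q α β r s (td2 β p) (td1 α p) (((0 : ℤ), (0 : ℤ)) - u) *
            twFac q α β r s u (((0 : ℤ), (0 : ℤ)) - u) := by
      intro u; simp only []; ring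
    rw [tsum_congr key, Summable.tsum_sub S1 S2, St11.tsum_conv_eq_tau3 hpL hd1L hd2L,
      St11.tsum_conv_eq_tau3 hpL hd2L hd1L]
  -- expansion identities
  have hBA : St11.tau3 q α β r s p (fun y => td1 α p y - Complex.I * td2 β p y)
      (fun y => td1 α p y + Complex.I * td2 β p y) =
      (St11.tau3 q α β r s p (td1 α p) (td1 α p) +
        St11.tau3 q α β r s p (td2 β p) (td2 β p)) +
        Complex.I * (St11.tau3 q α β r s p (td1 α p) (td2 β p) -
          St11.tau3 q α β r s p (td2 β p) (td1 α p)) := by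
    have hB' : (fun y => td1 α p y - Complex.I * td2 β p y) =
        fun y => td1 α p y + (-Complex.I) * td2 β p y := by funext y; ring
    rw [hB', St11.tau3_expand hpL hd1L hd2L (-Complex.I) Complex.I]
    linear_combination (-(St11.tau3 q α β r s p (td2 β p) (td2 β p))) * Complex.I_mul_I
  have hAB : St11.tau3 q α β r s p (fun y => td1 α p y + Complex.I * td2 β p y)
      (fun y => td1 α p y - Complex.I * td2 β p y) =
      (St11.tau3 q α β r s p (td1 α p) (td1 α p) +
        St11.tau3 q α β r s p (td2 β p) (td2 β p)) -
        Complex.I * (St11.tau3 q α β r s p (td1 α p) (td2 β p) -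
          St11.tau3 q α β r s p (td2 β p) (td1 α p)) := by
    have hB' : (fun y => td1 α p y - Complex.I * td2 β p y) =
        fun y => td1 α p y + (-Complex.I) * td2 β p y := by funext y; ring
    rw [hB', St11.tau3_expand hpL hd1L hd2L Complex.I (-Complex.I)]
    linear_combination (-(St11.tau3 q α β r s p (td2 β p) (td2 β p))) * Complex.I_mul_I
  -- soliton cases
  have hzero :
      (St11.tau3 q α β r s p (fun y => td1 α p y - Complex.I * td2 β p y)
        (fun y => td1 α p y + Complex.I * td2 β p y) = 0) ∨
      (St11.tau3 q α β r s p (fun y => td1 α p y + Complex.I * td2 β p y)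
        (fun y => td1 α p y - Complex.I * td2 β p y) = 0) := by
    rcases hsoliton with h | h | h | h
    · left
      rw [St11.tau3_cyclic]
      exact St11.tau3_zero hbL haL hpL h
    · left
      rw [St11.tau3_cyclic, St11.tau3_cyclic]
      exact St11.tau3_zero haL hpL hbL h
    · right
      rw [St11.tau3_cyclic]
      exact St11.tau3_zero haL hbL hpL h
    · right
      rw [St11.tau3_cyclic, St11.tau3_cyclic]
      exact St11.tau3_zero hbL hpL haL h
  -- endgame
  set T11 := St11.tau3 q α β r s p (td1 α p) (td1 α p) with hT11
  set T22 := St11.tau3 q α β r s p (td2 β p) (td2 β p) with hT22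
  set T12 := St11.tau3 q α β r s p (td1 α p) (td2 β p) with hT12
  set T21 := St11.tau3 q α β r s p (td2 β p) (td1 α p) with hT21
  have hS : T11 + T22 = (((t1 + t2) / 2 : ℝ) : ℂ) := by
    push_cast
    linear_combination (h1 + h2) / 2
  set v : ℝ := (t1 + t2) / (4 * Real.pi * |α * β|) with hvdef
  have hv : 0 ≤ v := by
    apply div_nonneg (by linarith)
    have := Real.pi_pos
    positivity
  have hA0 : (2 * (Real.pi : ℂ) * Complex.I * ((|α * β| : ℝ) : ℂ)) ≠ 0 :=
    mul_ne_zero (mul_ne_zero (mul_ne_zero two_ne_zero hπ) Complex.I_ne_zero) hkC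
  have hEpv : Ep = (v : ℂ) := by
    rw [hEp, hT1, hT2, hvdef]
    push_cast
    field_simp
  have hcv : c1p = (v : ℂ) ∨ c1p = -(v : ℂ) := by
    rcases hzero with h0 | h0
    · left
      rw [hBA] at h0
      have hX : T12 - T21 = Complex.I * (T11 + T22) := by
        linear_combination (-Complex.I) * h0 + (T12 - T21) * Complex.I_mul_I
      rw [hc1p, hcsplit, hX, hS, hvdef, inv_mul_eq_iff_eq_mul₀ hA0]
      push_cast
      field_simp
      ring
    · right
      rw [hAB] at h0
      have hX : T12 - T21 = -(Complex.I * (T11 + T22)) := by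
        linear_combination Complex.I * h0 + (T12 - T21) * Complex.I_mul_I
      rw [hc1p, hcsplit, hX, hS, hvdef, inv_mul_eq_iff_eq_mul₀ hA0]
      push_cast
      field_simp
      ring
  rcases hcv with hc | hc
  · rw [hEpv, hc, Complex.norm_real, Real.norm_eq_abs, _root_.abs_of_nonneg hv]
  · rw [hEpv, hc, norm_neg, Complex.norm_real, Real.norm_eq_abs, _root_.abs_of_nonneg hv]


end
end

section
/- Let g : ℝ → ℂ be differentiable and let μ ∈ ℂ. (i) If 2πi·x·g(x) + i·g′(x) = μ·g(x) for all x ∈ ℝ, then there exists c ∈ ℂ such that g(x) = c·e^{−πx² − iμx} for all x ∈ ℝ. (ii) If 2πi·x·g(x) − i·g′(x) = μ·g(x) for all x ∈ ℝ and g ∈ L²(ℝ), then g = 0. -/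
open MeasureTheory Complex Real Filter Finset

noncomputable section

lemma solve_ode (g g' : ℝ → ℂ) (hder : ∀ x, HasDerivAt g (g' x) x) (a b : ℂ)
    (hode : ∀ x, g' x = (2 * a * x + b) * g x) :
    ∀ x : ℝ, g x = g 0 * Complex.exp (a * x ^ 2 + b * x) := by
  set E : ℝ → ℂ := fun x => Complex.exp (-(a * x ^ 2 + b * x)) with hE
  have hEd : ∀ x : ℝ, HasDerivAt E (-(2 * a * x + b) * E x) x := by
    intro x
    have h1 : HasDerivAt (fun x : ℝ => (x : ℂ)) 1 x := Complex.ofRealCLM.hasDerivAt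
    have hA : HasDerivAt (fun x : ℝ => a * ((x : ℂ) * (x : ℂ))) (a * (2 * x)) x := by
      have := (h1.mul h1).const_mul a
      exact this.congr_deriv (by ring)
    have hB : HasDerivAt (fun x : ℝ => b * (x : ℂ)) b x := by
      simpa using h1.const_mul b
    have h := (hA.add hB).neg
    have heq : (fun x : ℝ => -(a * ((x : ℂ) * (x : ℂ)) + b * x)) =
        fun x : ℝ => -(a * (x : ℂ) ^ 2 + b * x) := by funext y; ring
    rw [show (-((fun x : ℝ => a * ((x : ℂ) * (x : ℂ))) + fun x : ℝ => b * (x : ℂ))) = (fun x : ℝ => -(a * ((x : ℂ) * (x : ℂ)) + b * x)) from rfl, heq] at h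
    have h2 : HasDerivAt (fun x : ℝ => -(a * (x : ℂ) ^ 2 + b * x)) (-(2 * a * x + b)) x := by
      exact h.congr_deriv (by ring)
    have := h2.cexp
    convert this using 1
    ring
  have hconst : ∀ x : ℝ, g x * E x = g 0 * E 0 := by
    intro x
    have hd : ∀ y : ℝ, HasDerivAt (fun x => g x * E x) 0 y := by
      intro y
      have := (hder y).mul (hEd y)
      rw [hode y] at this
      exact this.congr_deriv (by ring)
    have hdiff : Differentiable ℝ (fun x => g x * E x) := fun y => (hd y).differentiableAt
    have hderiv : ∀ y, deriv (fun x => g x * E x) y = 0 := fun y => (hd y).deriv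
    exact (is_const_of_deriv_eq_zero hdiff hderiv) x 0
  intro x
  have h0 : E 0 = 1 := by simp [hE]
  have h := hconst x
  rw [h0, mul_one] at h
  have h2 : g x * (E x * Complex.exp (a * x ^ 2 + b * x)) = g 0 * Complex.exp (a * x ^ 2 + b * x) := by
    rw [← mul_assoc, h]
  rwa [hE, ← Complex.exp_add, neg_add_cancel, Complex.exp_zero, mul_one] at h2

lemma antisoliton_zero (c μ : ℂ) (g : ℝ → ℂ)
    (hg : ∀ x : ℝ, g x = c * Complex.exp ((Real.pi : ℂ) * x ^ 2 + Complex.I * μ * x))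
    (hL2 : MemLp g 2 volume) : c = 0 := by
  by_contra hc
  have hmeas : AEStronglyMeasurable g volume := hL2.1
  have hint : Integrable (fun x => ‖g x‖ ^ 2) volume :=
    (memLp_two_iff_integrable_sq_norm hmeas).mp hL2
  set x₀ : ℝ := max 1 (|μ.im| / Real.pi) with hx₀
  have hbound : ∀ x ∈ Set.Ioi x₀, ‖c‖ ^ 2 ≤ ‖g x‖ ^ 2 := by
    intro x hx
    have hx1 : (1 : ℝ) ≤ x := le_trans (le_max_left _ _) (le_of_lt hx)
    have hx2 : |μ.im| / Real.pi ≤ x := le_trans (le_max_right _ _) (le_of_lt hx)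
    have hxpos : 0 < x := lt_of_lt_of_le one_pos hx1
    have hre : ((Real.pi : ℂ) * x ^ 2 + Complex.I * μ * x).re = Real.pi * x ^ 2 - μ.im * x := by
      simp [Complex.add_re, Complex.mul_re, ← Complex.ofReal_pow]; ring
    have hge : 0 ≤ Real.pi * x ^ 2 - μ.im * x := by
      have h1 : |μ.im| ≤ Real.pi * x := by
        rw [div_le_iff₀ Real.pi_pos] at hx2; linarith [hx2]
      nlinarith [abs_le.mp (le_refl |μ.im|), le_abs_self μ.im, sq_nonneg x]
    have hnorm : ‖g x‖ = ‖c‖ * Real.exp (Real.pi * x ^ 2 - μ.im * x) := by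
      rw [hg x, norm_mul, Complex.norm_exp, hre]
    rw [hnorm]
    have h1 : (1 : ℝ) ≤ Real.exp (Real.pi * x ^ 2 - μ.im * x) := Real.one_le_exp hge
    have hcnn : 0 ≤ ‖c‖ := norm_nonneg c
    nlinarith [mul_le_mul_of_nonneg_left h1 hcnn, sq_nonneg (‖c‖ * Real.exp (Real.pi * x ^ 2 - μ.im * x) - ‖c‖)]
  have hconst_int : IntegrableOn (fun _ : ℝ => ‖c‖ ^ 2) (Set.Ioi x₀) volume := by
    apply Integrable.mono (hint.integrableOn) aestronglyMeasurable_const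
    filter_upwards [ae_restrict_mem measurableSet_Ioi] with x hx
    simpa [_root_.abs_of_nonneg (sq_nonneg ‖g x‖)] using hbound x hx
  have hzero : ‖c‖ ^ 2 = 0 := by
    by_contra h0
    have := (integrable_const_iff (c := ‖c‖ ^ 2)).mp hconst_int
    rcases this with h | h
    · exact h0 h
    · rw [isFiniteMeasure_restrict] at h
      simp [Real.volume_Ioi] at h
  exact hc (by simpa using norm_eq_zero.mp (by nlinarith [norm_nonneg c]))

/-- the generalized Gaussians are the only solutions of the soliton
equation `(∇₁ + i∇₂)g = μg` on the Moyal plane, and the anti-soliton equation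
`(∇₁ - i∇₂)g = μg` has no nonzero solution in `L²(ℝ)`. -/
theorem statement17 (g g' : ℝ → ℂ) (hder : ∀ x : ℝ, HasDerivAt g (g' x) x) (μ : ℂ) :
    ((∀ x : ℝ, 2 * (Real.pi : ℂ) * Complex.I * (x : ℂ) * g x + Complex.I * g' x = μ * g x) →
      ∃ c : ℂ, ∀ x : ℝ,
        g x = c * Complex.exp (-(Real.pi : ℂ) * (x : ℂ) ^ 2 - Complex.I * μ * (x : ℂ))) ∧
    ((∀ x : ℝ, 2 * (Real.pi : ℂ) * Complex.I * (x : ℂ) * g x - Complex.I * g' x = μ * g x) →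
      MemLp g 2 volume → ∀ x : ℝ, g x = 0) := by
  constructor
  · intro h
    have hode : ∀ x : ℝ, g' x = (2 * (-(Real.pi : ℂ)) * x + (-(Complex.I * μ))) * g x := by
      intro x
      have hx := h x
      have hI : Complex.I * Complex.I = -1 := Complex.I_mul_I
      linear_combination (-Complex.I) * hx + (g' x + 2 * (Real.pi : ℂ) * x * g x) * hI
    have := solve_ode g g' hder (-(Real.pi : ℂ)) (-(Complex.I * μ)) hode
    refine ⟨g 0, fun x => ?_⟩
    rw [this x]
    congr 1
    ring_nf
  · intro h hL2
    have hode : ∀ x : ℝ, g' x = (2 * (Real.pi : ℂ) * x + Complex.I * μ) * g x := by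
      intro x
      have hx := h x
      have hI : Complex.I * Complex.I = -1 := Complex.I_mul_I
      linear_combination Complex.I * hx + (g' x - 2 * (Real.pi : ℂ) * x * g x) * hI
    have hg := solve_ode g g' hder (Real.pi : ℂ) (Complex.I * μ) hode
    have hg' : ∀ x : ℝ, g x = g 0 * Complex.exp ((Real.pi : ℂ) * x ^ 2 + Complex.I * μ * x) := by
      intro x; rw [hg x]
    have hc := antisoliton_zero (g 0) μ g hg' hL2
    intro x
    rw [hg' x, hc, zero_mul]


end
end
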